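/- arXiv:0901.2581 — 5 statements merged into one kernel-verified Lean document; each statement's English description precedes it below -/
import Mathlib

section
/- Let M be a subset of ℝ^N, let L be the affine span of M, let d be the dimension of L, and let μ be the d-dimensional Hausdorff measure on ℝ^N restricted to L. Then for μ-almost every v ∈ M, the support of v equals the maximal support over M; that is, for every index i ∈ {1,…,N}: v_i ≠ 0 if and only if there exists w ∈ M with w_i ≠ 0. In particular, the number of nonzero coordinates n_+(v) = #{i | v_i ≠ 0} is equal, for μ-almost every v ∈ M, to the constant #{i | ∃ w ∈ M, w_i ≠ 0}. -/
/-!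
If some `w ∈ M` has `w i ≠ 0`, the affine span `L` of `M` is not contained in the hyperplane
`{v | v i = 0}`, so their intersection is an affine subspace of dimension `< d` and hence
`μH[d]`-null. A finite union of these null slices carries every `v ∈ M` whose support is not
maximal.
-/

open MeasureTheory Module NNReal

section

variable {E : Type*} [NormedAddCommGroup E] [NormedSpace ℝ E] [FiniteDimensional ℝ E]
  [MeasurableSpace E] [BorelSpace E]

theorem hausdorffMeasure_affineSubspace_of_finrank_lt {A : AffineSubspace ℝ E} {d : ℕ}
    (h : finrank ℝ A.direction < d) : μH[d] (A : Set E) = 0 := by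
  rcases (A : Set E).eq_empty_or_nonempty with hA | hA
  · simp [hA]
  · have hdim : dimH (A : Set E) < (d : ℝ≥0) := by
      rw [Real.Convex.dimH_eq_finrank_vectorSpan A.convex hA, ← A.direction_eq_vectorSpan]
      exact_mod_cast h
    simpa using hausdorffMeasure_of_dimH_lt hdim

theorem hausdorffMeasure_affineSubspace_of_lt {A L : AffineSubspace ℝ E} (h : A < L) :
    μH[finrank ℝ L.direction] (A : Set E) = 0 := by
  rcases (A : Set E).eq_empty_or_nonempty with hA | hA
  · simp [hA]
  · exact hausdorffMeasure_affineSubspace_of_finrank_lt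
      (Submodule.finrank_lt_finrank_of_lt (AffineSubspace.direction_lt_of_nonempty h hA))

theorem ae_restrict_affineSubspace_notMem {L H : AffineSubspace ℝ E} (h : ¬L ≤ H) :
    ∀ᵐ v ∂(μH[finrank ℝ L.direction]).restrict (L : Set E), v ∉ H := by
  rw [ae_iff, Measure.restrict_apply' L.closed_of_finiteDimensional.measurableSet]
  simp only [not_not]
  exact hausdorffMeasure_affineSubspace_of_lt (inf_lt_right.mpr h)

theorem ae_restrict_affineSpan_apply_ne_zero {ι : Type*} [Countable ι] (M : Set E)
    (φ : ι → Dual ℝ E) :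
    ∀ᵐ v ∂(μH[finrank ℝ (affineSpan ℝ M).direction]).restrict (affineSpan ℝ M : Set E),
      ∀ i, (∃ w ∈ M, φ i w ≠ 0) → φ i v ≠ 0 := by
  refine ae_all_iff.mpr fun i => ?_
  by_cases hi : ∃ w ∈ M, φ i w ≠ 0
  · obtain ⟨w, hwM, hwi⟩ := hi
    have hL : ¬affineSpan ℝ M ≤ (LinearMap.ker (φ i)).toAffineSubspace := fun hle =>
      hwi (hle (subset_affineSpan ℝ M hwM))
    filter_upwards [ae_restrict_affineSubspace_notMem hL] with v hv _
    exact hv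
  · exact Filter.Eventually.of_forall fun v h => absurd h hi

end

/-- With respect to the natural Lebesgue measure `μ` on the affine span of
`M ⊆ ℝ^N` (the `d`-dimensional Hausdorff measure restricted to the affine span, `d` its
dimension), for almost every `v ∈ M` the support of `v` is the maximal support over `M`:
`v i ≠ 0 ↔ ∃ w ∈ M, w i ≠ 0` for every index `i`. In particular the number of nonzero
coordinates `n₊(v)` equals the constant `#{i | ∃ w ∈ M, w i ≠ 0}` almost everywhere on `M`. -/
theorem stmt1 (N : ℕ) (M : Set (EuclideanSpace ℝ (Fin N)))
    (L : AffineSubspace ℝ (EuclideanSpace ℝ (Fin N))) (hL : L = affineSpan ℝ M)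
    (d : ℕ) (hd : d = Module.finrank ℝ L.direction)
    (μ : Measure (EuclideanSpace ℝ (Fin N)))
    (hμ : μ = (μH[d]).restrict (L : Set (EuclideanSpace ℝ (Fin N)))) :
    ∀ᵐ v ∂μ, v ∈ M →
      (∀ i : Fin N, v i ≠ 0 ↔ ∃ w ∈ M, w i ≠ 0) ∧
      {i : Fin N | v i ≠ 0}.ncard = {i : Fin N | ∃ w ∈ M, w i ≠ 0}.ncard := by
  subst hμ hd hL
  filter_upwards [ae_restrict_affineSpan_apply_ne_zero M EuclideanSpace.projₗ] with v hv hvM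
  have hsupp (i : Fin N) : v i ≠ 0 ↔ ∃ w ∈ M, w i ≠ 0 := ⟨fun h => ⟨v, hvM, h⟩, hv i⟩
  exact ⟨hsupp, congrArg Set.ncard (Set.ext hsupp)⟩
end

section
/- Let S be an m × N real matrix, A a K × N real matrix, b ∈ ℝ^K, c ∈ ℝ^N, M = {v ∈ ℝ^N | S v = 0, A v ≤ b}, and let M_opt = {v ∈ M | ∀ w ∈ M, cᵀ w ≤ cᵀ v} be the set of optimal solutions, assumed nonempty. Let L_opt be the affine span of M_opt, d_opt its dimension, and μ_opt the d_opt-dimensional Hausdorff measure restricted to L_opt. Let n₀^opt = #{i ∈ {1,…,N} | v_i = 0 for all v ∈ M_opt}. Then for μ_opt-almost every v ∈ M_opt, the number of nonzero coordinates of v equals N − n₀^opt. -/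
/-!
For each coordinate `i` that does not vanish identically on `M_opt`, the hyperplane `vᵢ = 0`
meets the affine span `L_opt` of `M_opt` in a proper affine subspace of `L_opt`, which has
dimension `< d_opt` and hence Hausdorff dimension `< d_opt`, so it is `μH[d_opt]`-null.
Outside these finitely many null sets, the nonzero coordinates of `v ∈ M_opt` are exactly
those that do not vanish identically on `M_opt`.
-/

open MeasureTheory Set
open scoped NNReal

section HausdorffAffine

variable {E : Type*} [NormedAddCommGroup E] [NormedSpace ℝ E] [FiniteDimensional ℝ E]
  [MeasurableSpace E] [BorelSpace E]

theorem AffineSubspace.hausdorffMeasure_eq_zero_of_finrank_lt (Q : AffineSubspace ℝ E) {d : ℝ}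
    (hd : (Module.finrank ℝ Q.direction : ℝ) < d) : μH[d] (Q : Set E) = 0 := by
  rcases (Q : Set E).eq_empty_or_nonempty with hQ | hQ
  · rw [hQ, measure_empty]
  lift d to ℝ≥0 using (Nat.cast_nonneg _).trans hd.le
  apply hausdorffMeasure_of_dimH_lt
  rw [Real.Convex.dimH_eq_finrank_vectorSpan Q.convex hQ,
    ← AffineSubspace.direction_eq_vectorSpan]
  exact mod_cast hd

theorem AffineSubspace.hausdorffMeasure_finrank_eq_zero_of_lt {Q P : AffineSubspace ℝ E}
    (hQP : Q < P) : μH[Module.finrank ℝ P.direction] (Q : Set E) = 0 := by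
  rcases (Q : Set E).eq_empty_or_nonempty with hQ | hQ
  · rw [hQ, measure_empty]
  exact Q.hausdorffMeasure_eq_zero_of_finrank_lt <| mod_cast
    Submodule.finrank_lt_finrank_of_lt (AffineSubspace.direction_lt_of_nonempty hQP hQ)

theorem ae_restrict_affineSpan_notMem (s : Set E) {Q : AffineSubspace ℝ E} (hsQ : ¬s ⊆ Q) :
    ∀ᵐ v ∂(μH[Module.finrank ℝ (affineSpan ℝ s).direction]).restrict
      (affineSpan ℝ s : Set E), v ∉ Q := by
  have hlt : Q ⊓ affineSpan ℝ s < affineSpan ℝ s := inf_lt_right.2 (by rwa [affineSpan_le])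
  rw [ae_iff]
  simp only [not_not, SetLike.setOfPred_mem_eq]
  rw [Measure.restrict_apply Q.closed_of_finiteDimensional.measurableSet,
    ← AffineSubspace.coe_inf]
  exact AffineSubspace.hausdorffMeasure_finrank_eq_zero_of_lt hlt

end HausdorffAffine

theorem EuclideanSpace.ae_restrict_affineSpan_apply_ne_zero {ι : Type*} [Fintype ι]
    {s : Set (EuclideanSpace ℝ ι)} {i : ι} (hs : ∃ w ∈ s, w i ≠ 0) :
    ∀ᵐ v ∂(μH[Module.finrank ℝ (affineSpan ℝ s).direction]).restrict
      (affineSpan ℝ s : Set (EuclideanSpace ℝ ι)), v i ≠ 0 :=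
  let ⟨_, hw, hwi⟩ := hs
  ae_restrict_affineSpan_notMem s
    (Q := (LinearMap.ker (EuclideanSpace.proj (𝕜 := ℝ) i).toLinearMap).toAffineSubspace)
    fun h => hwi (h hw)

theorem stmt8_general (N : ℕ)
    (Mopt : Set (EuclideanSpace ℝ (Fin N)))
    (Lopt : AffineSubspace ℝ (EuclideanSpace ℝ (Fin N))) (hL : Lopt = affineSpan ℝ Mopt)
    (dopt : ℕ) (hd : dopt = Module.finrank ℝ Lopt.direction)
    (μ : Measure (EuclideanSpace ℝ (Fin N)))
    (hμ : μ = (μH[dopt]).restrict (Lopt : Set (EuclideanSpace ℝ (Fin N))))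
    (n₀ : ℕ) (hn₀ : n₀ = {i : Fin N | ∀ v ∈ Mopt, v i = 0}.ncard) :
    ∀ᵐ v ∂μ, v ∈ Mopt → {i : Fin N | v i ≠ 0}.ncard = N - n₀ := by
  subst hL hd hn₀
  have hsupp : ∀ᵐ v ∂μ, ∀ i : Fin N, (∃ w ∈ Mopt, w i ≠ 0) → v i ≠ 0 :=
    ae_all_iff.2 fun i => Filter.eventually_imp_distrib_left.2
      fun hi => hμ ▸ EuclideanSpace.ae_restrict_affineSpan_apply_ne_zero hi
  filter_upwards [hsupp] with v hv hvM
  have hzero : {i : Fin N | v i ≠ 0} = {i : Fin N | ∀ w ∈ Mopt, w i = 0}ᶜ := by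
    ext i
    simp only [mem_ofPred_eq, mem_compl_iff, not_forall, exists_prop]
    exact ⟨fun hvi => ⟨v, hvM, hvi⟩, hv i⟩
  rw [hzero, ncard_compl, Nat.card_eq_fintype_card, Fintype.card_fin]

/-- Let `M_opt` be the (nonempty) optimal solution set of the linear
program `maximize cᵀ v` over `M = {v | S v = 0, A v ≤ b}`, and let `μ` be the natural
Lebesgue measure on `M_opt`, namely the Hausdorff measure of dimension `d_opt` (the
dimension of the affine span of `M_opt`) restricted to that affine span. With
`n₀ = #{i | vᵢ = 0 for all v ∈ M_opt}`, almost every `v ∈ M_opt` has exactly `N − n₀`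
nonzero coordinates. -/
theorem stmt8 (m N K : ℕ) (S : Matrix (Fin m) (Fin N) ℝ)
    (A : Matrix (Fin K) (Fin N) ℝ) (b : Fin K → ℝ) (c : Fin N → ℝ)
    (M : Set (EuclideanSpace ℝ (Fin N)))
    (hM : M = {v | S.mulVec v.ofLp = 0 ∧ A.mulVec v.ofLp ≤ b})
    (Mopt : Set (EuclideanSpace ℝ (Fin N)))
    (hMopt : Mopt = {v ∈ M | ∀ w ∈ M, c ⬝ᵥ w ≤ c ⬝ᵥ v})
    (hne : Mopt.Nonempty)
    (Lopt : AffineSubspace ℝ (EuclideanSpace ℝ (Fin N))) (hL : Lopt = affineSpan ℝ Mopt)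
    (dopt : ℕ) (hd : dopt = Module.finrank ℝ Lopt.direction)
    (μ : Measure (EuclideanSpace ℝ (Fin N)))
    (hμ : μ = (μH[dopt]).restrict (Lopt : Set (EuclideanSpace ℝ (Fin N))))
    (n₀ : ℕ) (hn₀ : n₀ = {i : Fin N | ∀ v ∈ Mopt, v i = 0}.ncard) :
    ∀ᵐ v ∂μ, v ∈ Mopt → {i : Fin N | v i ≠ 0}.ncard = N - n₀ :=
  stmt8_general N Mopt Lopt hL dopt hd μ hμ n₀ hn₀
end

section
/- Let L be an affine subspace of ℝ^N of finite dimension d. Let I be a finite index set, and for each i ∈ I let a_i ∈ ℝ^N and b_i ∈ ℝ, with H_i = {v ∈ ℝ^N | a_i · v = b_i}. Suppose L' = L ∩ ⋂_{i∈I} H_i is nonempty, and let d' be its dimension. Then there exists a subset J ⊆ I with #J = d − d' such that the family {a_i : i ∈ J} is linearly independent in ℝ^N. -/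
open Matrix

noncomputable def stmt9DualRestrict (N : ℕ) (V : Submodule ℝ (Fin N → ℝ)) :
    (Fin N → ℝ) →ₗ[ℝ] Module.Dual ℝ V where
  toFun a :=
    { toFun := fun v => a ⬝ᵥ (v : Fin N → ℝ)
      map_add' := fun u v => by simp [dotProduct_add]
      map_smul' := fun c v => by simp [dotProduct_smul] }
  map_add' := fun u v => by ext w; simp [add_dotProduct]
  map_smul' := fun c u => by ext w; simp [smul_dotProduct]

set_option maxHeartbeats 1000000 in
set_option synthInstance.maxHeartbeats 400000 in
/-- Let `L` be an affine subspace of `ℝ^N` of finite dimension `d`, and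
let `L'` be the (nonempty) intersection of `L` with finitely many affine hyperplanes
`Hᵢ = {v | aᵢ · v = bᵢ}`, `i ∈ I`, with `L'` of dimension `d'`. Then there is a subset
`J ⊆ I` of cardinality `d − d'` such that `{aᵢ : i ∈ J}` is linearly independent. -/
theorem stmt9 (N : ℕ) {ι : Type*} (L : AffineSubspace ℝ (Fin N → ℝ))
    (d : ℕ) (hd : Module.finrank ℝ L.direction = d)
    (I : Finset ι) (a : ι → (Fin N → ℝ)) (b : ι → ℝ)
    (L' : AffineSubspace ℝ (Fin N → ℝ))
    (hL' : (L' : Set (Fin N → ℝ)) =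
      (L : Set (Fin N → ℝ)) ∩ ⋂ i ∈ I, {v : Fin N → ℝ | a i ⬝ᵥ v = b i})
    (hne : (L' : Set (Fin N → ℝ)).Nonempty)
    (d' : ℕ) (hd' : Module.finrank ℝ L'.direction = d') :
    ∃ J : Finset ι, J ⊆ I ∧ J.card = d - d' ∧
      LinearIndependent ℝ (fun i : J => a i) := by
  classical
  obtain ⟨p, hp⟩ := hne
  have hpL' : p ∈ L' := hp
  have hp' : p ∈ (L : Set (Fin N → ℝ)) ∩ ⋂ i ∈ I, {v : Fin N → ℝ | a i ⬝ᵥ v = b i} := by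
    rw [← hL']; exact hp
  obtain ⟨hpL, hpH⟩ := hp'
  simp only [Set.mem_iInter, Set.mem_setOf_eq] at hpH
  set V := L.direction with hV
  set A : (Fin N → ℝ) →ₗ[ℝ] Module.Dual ℝ V := stmt9DualRestrict N V with hA
  set g : ι → Module.Dual ℝ V := fun i => A (a i) with hg
  have hgapply : ∀ i (v : V), g i v = a i ⬝ᵥ (v : Fin N → ℝ) := fun i v => rfl
  -- description of the direction of L'
  have hdir : ∀ v : Fin N → ℝ, v ∈ L'.direction ↔
      v ∈ V ∧ ∀ i ∈ I, a i ⬝ᵥ v = 0 := by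
    intro v
    rw [← AffineSubspace.vadd_mem_iff_mem_direction v hpL',
        ← AffineSubspace.vadd_mem_iff_mem_direction v hpL]
    have h1 : (v +ᵥ p ∈ L') ↔ v +ᵥ p ∈ (L' : Set (Fin N → ℝ)) := Iff.rfl
    rw [h1, hL', Set.mem_inter_iff]
    simp only [Set.mem_iInter, Set.mem_setOf_eq, vadd_eq_add, dotProduct_add]
    constructor
    · rintro ⟨h2, h3⟩
      refine ⟨h2, fun i hi => ?_⟩
      have := h3 i hi
      rw [hpH i hi] at this
      linarith
    · rintro ⟨h2, h3⟩
      exact ⟨h2, fun i hi => by rw [h3 i hi, hpH i hi, zero_add]⟩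
  have hle : L'.direction ≤ V := fun v hv => ((hdir v).mp hv).1
  -- the span of the restricted functionals
  set W : Submodule ℝ (Module.Dual ℝ V) := Submodule.span ℝ (g '' ↑I) with hW
  have hcoann : W.dualCoannihilator = Submodule.comap V.subtype L'.direction := by
    ext v
    rw [Submodule.mem_dualCoannihilator, Submodule.mem_comap]
    constructor
    · intro h
      rw [hdir]
      refine ⟨v.2, fun i hi => ?_⟩
      exact h (g i) (Submodule.subset_span ⟨i, hi, rfl⟩)
    · intro h φ hφ
      have h2 := ((hdir _).mp h).2
      have : W ≤ LinearMap.ker (Module.Dual.eval ℝ (Module.Dual ℝ V) |>.flip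
          (Module.Dual.eval ℝ V v)) := by
        rw [hW, Submodule.span_le]
        rintro _ ⟨i, hi, rfl⟩
        simp only [SetLike.mem_coe, LinearMap.mem_ker]
        show g i v = 0
        exact h2 i hi
      have := this hφ
      simpa using this
  have hWrank : Module.finrank ℝ W = d - d' ∧ d' ≤ d := by
    have h1 := Subspace.finrank_add_finrank_dualCoannihilator_eq W
    rw [hcoann] at h1
    have h2 : Module.finrank ℝ (Submodule.comap V.subtype L'.direction) = d' := by
      rw [← hd']; exact (Submodule.comapSubtypeEquivOfLe hle).finrank_eq
    rw [h2, hd] at h1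
    omega
  -- extract a linearly independent subfamily
  obtain ⟨s, hs_sub, hs_span, hs_li⟩ := exists_linearIndependent ℝ (g '' ↑I)
  have hs_fin : s.Finite := hs_li.setFinite
  have hs_fintype : Fintype s := hs_fin.fintype
  have hs_card : Module.finrank ℝ (Submodule.span ℝ s) = s.toFinset.card :=
    finrank_span_set_eq_card hs_li
  have hcard : s.toFinset.card = d - d' := by
    rw [← hs_card, hs_span, ← hW, hWrank.1]
  -- choose indices
  have hsel : ∀ x ∈ s, ∃ i, i ∈ I ∧ g i = x := by
    intro x hx
    obtain ⟨i, hi, hgi⟩ := hs_sub hx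
    exact ⟨i, hi, hgi⟩
  choose c hcI hcg using hsel
  set J : Finset ι := s.toFinset.attach.image
    (fun x => c x.1 (Set.mem_toFinset.mp x.2)) with hJ
  have hJI : J ⊆ I := by
    intro j hj
    rw [hJ, Finset.mem_image] at hj
    obtain ⟨x, _, rfl⟩ := hj
    exact hcI _ _
  have hJcard : J.card = d - d' := by
    rw [hJ, Finset.card_image_of_injective _ ?_, Finset.card_attach, hcard]
    intro x y hxy
    apply Subtype.ext
    rw [← hcg x.1 (Set.mem_toFinset.mp x.2), ← hcg y.1 (Set.mem_toFinset.mp y.2)]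
    exact congrArg g hxy
  have hgJmem : ∀ j ∈ J, g j ∈ s := by
    intro j hj
    rw [hJ, Finset.mem_image] at hj
    obtain ⟨x, _, rfl⟩ := hj
    rw [hcg]
    exact Set.mem_toFinset.mp x.2
  have hginj : ∀ j1 ∈ J, ∀ j2 ∈ J, g j1 = g j2 → j1 = j2 := by
    intro j1 hj1 j2 hj2 h
    rw [hJ, Finset.mem_image] at hj1 hj2
    obtain ⟨x1, _, rfl⟩ := hj1
    obtain ⟨x2, _, rfl⟩ := hj2
    rw [hcg, hcg] at h
    obtain rfl : x1 = x2 := Subtype.ext h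
    rfl
  have hli : LinearIndependent ℝ (⇑A ∘ fun j : J => a j) := by
    have h2 : Function.Injective (fun j : J => (⟨g j, hgJmem j j.2⟩ : s)) := by
      intro j1 j2 h
      exact Subtype.ext (hginj _ j1.2 _ j2.2 (congrArg Subtype.val h))
    have h3 := hs_li.comp _ h2
    have heq : (Subtype.val ∘ fun j : J => (⟨g j, hgJmem j j.2⟩ : s))
        = (⇑A ∘ fun j : J => a j) := by
      funext j
      rfl
    rwa [heq] at h3
  exact ⟨J, hJI, hJcard, LinearIndependent.of_comp A hli⟩
end

section
/- Let S be an m × N real matrix, A a K × N real matrix, b ∈ ℝ^K, and M = {v ∈ ℝ^N | S v = 0, A v ≤ b}. Then the set of objective vectors c ∈ ℝ^N for which the linear program 'maximize cᵀ v over M' has more than one optimal solution — i.e., {c ∈ ℝ^N | ∃ x, y ∈ M, x ≠ y, and both x and y maximize cᵀ v over M} — has Lebesgue measure zero in ℝ^N. -/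
open Matrix MeasureTheory

private def Lsub (m N K : ℕ) (S : Matrix (Fin m) (Fin N) ℝ)
    (A : Matrix (Fin K) (Fin N) ℝ) (I : Finset (Fin K)) : Submodule ℝ (Fin N → ℝ) where
  carrier := {z | S.mulVec z = 0 ∧ ∀ i ∈ I, A.mulVec z i = 0}
  add_mem' := by
    rintro a b ⟨ha1, ha2⟩ ⟨hb1, hb2⟩
    exact ⟨by rw [Matrix.mulVec_add, ha1, hb1, add_zero],
      fun i hi => by rw [Matrix.mulVec_add]; simp [ha2 i hi, hb2 i hi]⟩
  zero_mem' := ⟨by simp, fun i hi => by simp⟩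
  smul_mem' := by
    rintro t a ⟨ha1, ha2⟩
    exact ⟨by simp [Matrix.mulVec_smul, ha1],
      fun i hi => by simp [Matrix.mulVec_smul, ha2 i hi]⟩

private def Wsub (m N K : ℕ) (S : Matrix (Fin m) (Fin N) ℝ)
    (A : Matrix (Fin K) (Fin N) ℝ) (I : Finset (Fin K)) : Submodule ℝ (Fin N → ℝ) where
  carrier := {c | ∀ z ∈ Lsub m N K S A I, c ⬝ᵥ z = 0}
  add_mem' := by
    intro a b ha hb z hz
    rw [add_dotProduct, ha z hz, hb z hz, add_zero]
  zero_mem' := fun z _ => zero_dotProduct z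
  smul_mem' := by
    intro t a ha z hz
    rw [smul_dotProduct, ha z hz, smul_zero]

private lemma mul_nonpos_nhds {a : ℝ} (h : ∀ᶠ t in nhds (0:ℝ), t * a ≤ 0) : a = 0 := by
  obtain ⟨ε, εpos, hε⟩ := Metric.eventually_nhds_iff.mp h
  have h1 : (ε/2) * a ≤ 0 := hε (by rw [Real.dist_eq]; rw [abs_of_pos (by linarith)]; linarith)
  have h2 : (-(ε/2)) * a ≤ 0 := hε (by rw [Real.dist_eq]; rw [sub_zero, abs_neg, abs_of_pos (by linarith)]; linarith)
  nlinarith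

/-- For `M = {v | S v = 0, A v ≤ b}`, the set of objective vectors
`c ∈ ℝ^N` for which the linear program `maximize cᵀ v` over `M` has more than one optimal
solution has Lebesgue measure zero in `ℝ^N`. -/
theorem stmt11 (m N K : ℕ) (S : Matrix (Fin m) (Fin N) ℝ)
    (A : Matrix (Fin K) (Fin N) ℝ) (b : Fin K → ℝ)
    (M : Set (Fin N → ℝ)) (hM : M = {v | S.mulVec v = 0 ∧ A.mulVec v ≤ b}) :
    volume {c : Fin N → ℝ | ∃ x ∈ M, ∃ y ∈ M, x ≠ y ∧
      (∀ w ∈ M, c ⬝ᵥ w ≤ c ⬝ᵥ x) ∧ (∀ w ∈ M, c ⬝ᵥ w ≤ c ⬝ᵥ y)} = 0 := by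
  classical
  have hsub : {c : Fin N → ℝ | ∃ x ∈ M, ∃ y ∈ M, x ≠ y ∧
      (∀ w ∈ M, c ⬝ᵥ w ≤ c ⬝ᵥ x) ∧ (∀ w ∈ M, c ⬝ᵥ w ≤ c ⬝ᵥ y)} ⊆
      ⋃ I : Finset (Fin K), {c | (∃ z ∈ Lsub m N K S A I, z ≠ 0) ∧ c ∈ Wsub m N K S A I} := by
    rintro c ⟨x, hx, y, hy, hxy, hmx, hmy⟩
    have hx' := hx; have hy' := hy
    rw [hM] at hx' hy'
    obtain ⟨hx1, hx2⟩ := hx'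
    obtain ⟨hy1, hy2⟩ := hy'
    have hceq : c ⬝ᵥ x = c ⬝ᵥ y := le_antisymm (hmy x hx) (hmx y hy)
    obtain ⟨u, hu⟩ : ∃ u : Fin N → ℝ, u = (1/2 : ℝ) • (x + y) := ⟨_, rfl⟩
    have hAu : ∀ i, A.mulVec u i = (1/2 : ℝ) * (A.mulVec x i + A.mulVec y i) := by
      intro i
      rw [hu, Matrix.mulVec_smul, Matrix.mulVec_add]
      simp [smul_eq_mul]
    have hSu : S.mulVec u = 0 := by
      rw [hu, Matrix.mulVec_smul, Matrix.mulVec_add, hx1, hy1, add_zero, smul_zero]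
    have hAub : ∀ i, A.mulVec u i ≤ b i := by
      intro i
      have := hx2 i; have := hy2 i
      rw [hAu i]; linarith
    have huM : u ∈ M := by rw [hM]; exact ⟨hSu, hAub⟩
    have hcu : c ⬝ᵥ u = c ⬝ᵥ x := by
      rw [hu, dotProduct_smul, dotProduct_add, hceq, smul_eq_mul]
      ring
    set I : Finset (Fin K) := Finset.univ.filter (fun i => A.mulVec u i = b i) with hI
    refine Set.mem_iUnion.mpr ⟨I, ?_, ?_⟩
    · refine ⟨x - y, ⟨?_, ?_⟩, sub_ne_zero.mpr hxy⟩
      · rw [Matrix.mulVec_sub, hx1, hy1, sub_zero]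
      · intro i hi
        have hib : A.mulVec u i = b i := by simpa [hI] using hi
        have h1 := hx2 i
        have h2 := hy2 i
        rw [hAu i] at hib
        have hax : A.mulVec x i = b i := by linarith
        have hay : A.mulVec y i = b i := by linarith
        rw [Matrix.mulVec_sub, Pi.sub_apply, hax, hay, sub_self]
    · intro w hw
      obtain ⟨hw1, hw2⟩ := hw
      have hev : ∀ᶠ t in nhds (0:ℝ), u + t • w ∈ M := by
        have hAle : ∀ i : Fin K, ∀ᶠ t in nhds (0:ℝ),
            A.mulVec (u + t • w) i ≤ b i := by
          intro i
          have hexp : ∀ t : ℝ, A.mulVec (u + t • w) i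
              = A.mulVec u i + t * A.mulVec w i := by
            intro t
            rw [Matrix.mulVec_add, Matrix.mulVec_smul]
            simp [smul_eq_mul]
          by_cases hi : i ∈ I
          · filter_upwards with t
            rw [hexp t, hw2 i hi, mul_zero, add_zero]
            exact hAub i
          · have hlt : A.mulVec u i < b i := by
              refine lt_of_le_of_ne (hAub i) fun h => hi ?_
              simp [hI, h]
            have htend : Filter.Tendsto (fun t : ℝ => A.mulVec u i + t * A.mulVec w i)
                (nhds 0) (nhds (A.mulVec u i)) := by
              have : Filter.Tendsto (fun t : ℝ => A.mulVec u i + t * A.mulVec w i)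
                  (nhds 0) (nhds (A.mulVec u i + 0 * A.mulVec w i)) :=
                Filter.Tendsto.add tendsto_const_nhds
                  (Filter.Tendsto.mul Filter.tendsto_id tendsto_const_nhds)
              simpa using this
            filter_upwards [htend.eventually_lt_const hlt] with t ht
            rw [hexp t]
            exact le_of_lt ht
        rw [hM]
        filter_upwards [Filter.eventually_all.mpr hAle] with t ht
        refine ⟨?_, ht⟩
        rw [Matrix.mulVec_add, Matrix.mulVec_smul, hw1, smul_zero, add_zero, hSu]
      have hev2 : ∀ᶠ t in nhds (0:ℝ), t * (c ⬝ᵥ w) ≤ 0 := by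
        filter_upwards [hev] with t ht
        have := hmx _ ht
        rw [dotProduct_add, dotProduct_smul, smul_eq_mul, hcu] at this
        linarith
      exact mul_nonpos_nhds hev2
  refine measure_mono_null hsub (measure_iUnion_null fun I => ?_)
  by_cases h : ∃ z ∈ Lsub m N K S A I, z ≠ 0
  · have hne : Wsub m N K S A I ≠ ⊤ := by
      intro htop
      obtain ⟨z, hz, hz0⟩ := h
      have hzW : z ∈ Wsub m N K S A I := htop ▸ Submodule.mem_top
      exact hz0 (by simpa using (dotProduct_self_eq_zero.mp (hzW z hz)))
    exact measure_mono_null (fun c hc => hc.2)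
      (Measure.addHaar_submodule _ (Wsub m N K S A I) hne)
  · have : {c : Fin N → ℝ | (∃ z ∈ Lsub m N K S A I, z ≠ 0) ∧ c ∈ Wsub m N K S A I} = ∅ := by
      ext c; simp only [Set.mem_setOf_eq, Set.mem_empty_iff_false, iff_false]
      rintro ⟨hz, _⟩; exact h hz
    rw [this]; exact measure_empty
end

section
/- Let S be an m × N real matrix, A a K × N real matrix, b ∈ ℝ^K, and M = {v ∈ ℝ^N | S v = 0, A v ≤ b}, assumed nonempty. Let B = {c ∈ ℝ^N | the function v ↦ cᵀ v is bounded above on M}. Then for Lebesgue-almost every c ∈ B, there exists a unique v ∈ M maximizing cᵀ v over M, and this unique maximizer is an extreme point of M. Equivalently, the set of c ∈ B for which there is not a unique maximizer located at an extreme point of M has Lebesgue measure zero in ℝ^N. -/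
/-!
The support function `h c = sup_{v ∈ M} c ⬝ᵥ v` is convex on the convex cone `B` of directions
in which `M` is bounded above. The frontier of `B` is Lebesgue-null, and on the interior of `B`
the convex function `h` is locally Lipschitz, hence differentiable almost everywhere
(Rademacher). For `c` in the interior of `B` the superlevel sets of `c ⬝ᵥ ·` on the closed set `M`
are compact, so a maximizer `v` exists; since `h c' ≥ c' ⬝ᵥ v` with equality at `c`, the
derivative of `h` at `c` is `v ⬝ᵥ ·`, so the maximizer is unique where `h` is differentiable.
A unique maximizer of a linear functional is an exposed, hence extreme, point.
-/

open Matrix MeasureTheory Set Filter Topology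

theorem LocallyLipschitzOn.ae_differentiableAt {E F : Type*} [NormedAddCommGroup E]
    [NormedSpace ℝ E] [FiniteDimensional ℝ E] [MeasurableSpace E] [BorelSpace E]
    [NormedAddCommGroup F] [NormedSpace ℝ F] [FiniteDimensional ℝ F]
    (μ : Measure E) [μ.IsAddHaarMeasure] {f : E → F} {s : Set E} (hs : IsOpen s)
    (hf : LocallyLipschitzOn s f) :
    ∀ᵐ x ∂μ, x ∈ s → DifferentiableAt ℝ f x := by
  rw [ae_iff]
  refine measure_null_of_locally_null _ fun x hx => ?_
  obtain ⟨K, t, ht, hlip⟩ := hf (of_not_imp hx)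
  rw [hs.nhdsWithin_eq (of_not_imp hx)] at ht
  refine ⟨_ ∩ interior t, inter_mem_nhdsWithin _ (interior_mem_nhds.2 ht), ?_⟩
  refine measure_mono_null (fun y ⟨hy, hyt⟩ => ?_)
    (ae_iff.1 ((hlip.mono interior_subset).ae_differentiableWithinAt_of_mem (μ := μ)))
  exact fun h => hy fun _ => (h hyt).differentiableAt (isOpen_interior.mem_nhds hyt)

theorem ConvexOn.ae_differentiableAt {E : Type*} [NormedAddCommGroup E]
    [NormedSpace ℝ E] [FiniteDimensional ℝ E] [MeasurableSpace E] [BorelSpace E]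
    (μ : Measure E) [μ.IsAddHaarMeasure] {f : E → ℝ} {s : Set E} (hf : ConvexOn ℝ s f) :
    ∀ᵐ x ∂μ, x ∈ interior s → DifferentiableAt ℝ f x :=
  hf.locallyLipschitzOn_interior.ae_differentiableAt μ isOpen_interior

namespace Matrix

variable {ι : Type*} [Fintype ι]

noncomputable def dotProductCLM (v : ι → ℝ) : StrongDual ℝ (ι → ℝ) :=
  LinearMap.toContinuousLinearMap (dotProductBilin ℝ ℝ v)

@[simp]
theorem dotProductCLM_apply (v w : ι → ℝ) : dotProductCLM v w = v ⬝ᵥ w := rfl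

theorem dotProductCLM_injective : Function.Injective (dotProductCLM : (ι → ℝ) → _) :=
  fun v w h => dotProduct_eq v w fun u => by simpa using DFunLike.congr_fun h u

end Matrix

section SupportFunction

variable {ι : Type*} [Fintype ι] {M : Set (ι → ℝ)} {c v : ι → ℝ}

def boundedDirections (M : Set (ι → ℝ)) : Set (ι → ℝ) :=
  {c | ∃ C : ℝ, ∀ v ∈ M, c ⬝ᵥ v ≤ C}

-- Only meaningful on `boundedDirections M`: elsewhere the `sSup` is a junk value.
noncomputable def supportFun (M : Set (ι → ℝ)) (c : ι → ℝ) : ℝ :=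
  sSup ((c ⬝ᵥ ·) '' M)

theorem le_supportFun (hc : c ∈ boundedDirections M) (hv : v ∈ M) :
    c ⬝ᵥ v ≤ supportFun M c :=
  let ⟨C, hC⟩ := hc
  le_csSup ⟨C, forall_mem_image.2 hC⟩ (mem_image_of_mem _ hv)

theorem supportFun_le (hM : M.Nonempty) {C : ℝ} (h : ∀ v ∈ M, c ⬝ᵥ v ≤ C) :
    supportFun M c ≤ C :=
  csSup_le (hM.image _) (forall_mem_image.2 h)

theorem convex_boundedDirections : Convex ℝ (boundedDirections M) := by
  rintro x ⟨Cx, hx⟩ y ⟨Cy, hy⟩ a b ha hb -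
  refine ⟨a * Cx + b * Cy, fun v hv => ?_⟩
  simpa [add_dotProduct, smul_dotProduct] using
    add_le_add (mul_le_mul_of_nonneg_left (hx v hv) ha) (mul_le_mul_of_nonneg_left (hy v hv) hb)

theorem convexOn_supportFun (hM : M.Nonempty) :
    ConvexOn ℝ (boundedDirections M) (supportFun M) := by
  refine ⟨convex_boundedDirections, fun x hx y hy a b ha hb _ =>
    supportFun_le hM fun v hv => ?_⟩
  simpa [add_dotProduct, smul_dotProduct] using
    add_le_add (mul_le_mul_of_nonneg_left (le_supportFun hx hv) ha)
      (mul_le_mul_of_nonneg_left (le_supportFun hy hv) hb)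

theorem exists_dotProduct_le_of_mem_interior (hc : c ∈ interior (boundedDirections M))
    (d : ι → ℝ) (t : ℝ) : ∃ C, ∀ v ∈ M, t ≤ c ⬝ᵥ v → d ⬝ᵥ v ≤ C := by
  have hlim : Tendsto (fun s : ℝ => c + s • d) (𝓝[>] 0) (𝓝 c) := by
    have hcont : Continuous fun s : ℝ => c + s • d := by fun_prop
    simpa using (hcont.tendsto 0).mono_left nhdsWithin_le_nhds
  obtain ⟨s, ⟨C, hC⟩, hs⟩ :=
    ((hlim.eventually (mem_interior_iff_mem_nhds.1 hc)).and self_mem_nhdsWithin).exists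
  refine ⟨(C - t) / s, fun v hv ht => ?_⟩
  have h := hC v hv
  rw [add_dotProduct, smul_dotProduct, smul_eq_mul] at h
  rw [le_div_iff₀ hs]
  linarith

theorem isBounded_superlevel_of_mem_interior (hc : c ∈ interior (boundedDirections M)) (t : ℝ) :
    Bornology.IsBounded {v ∈ M | t ≤ c ⬝ᵥ v} := by
  classical
  choose hi hhi using fun i => exists_dotProduct_le_of_mem_interior hc (Pi.single i 1) t
  choose lo hlo using fun i => exists_dotProduct_le_of_mem_interior hc (-Pi.single i 1) t
  refine (Metric.isBounded_Icc (-lo) hi).subset fun v ⟨hv, ht⟩ => ⟨fun i => ?_, fun i => ?_⟩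
  · simpa [neg_le] using hlo i v hv ht
  · simpa using hhi i v hv ht

theorem exists_isMaxOn_of_mem_interior (hcl : IsClosed M) (hM : M.Nonempty)
    (hc : c ∈ interior (boundedDirections M)) : ∃ v ∈ M, IsMaxOn (c ⬝ᵥ ·) M v := by
  obtain ⟨v₀, hv₀⟩ := hM
  have hcont : Continuous (c ⬝ᵥ ·) := (dotProductCLM c).continuous
  have hcpt : IsCompact {v ∈ M | c ⬝ᵥ v₀ ≤ c ⬝ᵥ v} :=
    Metric.isCompact_of_isClosed_isBounded (hcl.inter (isClosed_le continuous_const hcont))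
      (isBounded_superlevel_of_mem_interior hc _)
  obtain ⟨v, ⟨hv, -⟩, hmax⟩ :=
    hcpt.exists_isMaxOn ⟨v₀, hv₀, le_rfl⟩ hcont.continuousOn
  refine ⟨v, hv, fun w hw => ?_⟩
  rcases le_total (c ⬝ᵥ v₀) (c ⬝ᵥ w) with h | h
  · exact hmax ⟨hw, h⟩
  · exact h.trans (hmax ⟨hv₀, le_rfl⟩)

theorem fderiv_supportFun_eq_of_isMaxOn (hc : c ∈ interior (boundedDirections M))
    (hf : DifferentiableAt ℝ (supportFun M) c) (hv : v ∈ M) (hmax : IsMaxOn (c ⬝ᵥ ·) M v) :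
    fderiv ℝ (supportFun M) c = dotProductCLM v := by
  have hmin : IsLocalMin (fun c' => supportFun M c' - dotProductCLM v c') c := by
    filter_upwards [mem_interior_iff_mem_nhds.1 hc] with c' hc'
    have h₁ := le_supportFun hc' hv
    have h₂ := supportFun_le ⟨v, hv⟩ hmax
    simp only [dotProductCLM_apply, dotProduct_comm v]
    linarith
  have h := hmin.fderiv_eq_zero
  rwa [fderiv_fun_sub hf (dotProductCLM v).differentiableAt, ContinuousLinearMap.fderiv,
    sub_eq_zero] at h

theorem existsUnique_isMaxOn_of_differentiableAt (hcl : IsClosed M) (hM : M.Nonempty)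
    (hc : c ∈ interior (boundedDirections M)) (hf : DifferentiableAt ℝ (supportFun M) c) :
    ∃! v, v ∈ M ∧ IsMaxOn (c ⬝ᵥ ·) M v := by
  obtain ⟨v, hv, hmax⟩ := exists_isMaxOn_of_mem_interior hcl hM hc
  refine ⟨v, ⟨hv, hmax⟩, fun w ⟨hw, hwmax⟩ => dotProductCLM_injective ?_⟩
  rw [← fderiv_supportFun_eq_of_isMaxOn hc hf hw hwmax,
    fderiv_supportFun_eq_of_isMaxOn hc hf hv hmax]

theorem mem_exposedPoints_of_unique_isMaxOn (hv : v ∈ M) (hmax : IsMaxOn (c ⬝ᵥ ·) M v)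
    (huniq : ∀ w ∈ M, IsMaxOn (c ⬝ᵥ ·) M w → w = v) : v ∈ M.exposedPoints ℝ :=
  ⟨hv, dotProductCLM c, fun w hw =>
    ⟨hmax hw, fun h => huniq w hw fun _ hu => (hmax hu).trans h⟩⟩

end SupportFunction

/-- For nonempty `M = {v | S v = 0, A v ≤ b}` and
`B = {c | v ↦ cᵀ v is bounded above on M}`, for Lebesgue-almost every `c ∈ B` the linear
program `maximize cᵀ v` over `M` has a unique maximizer, and this maximizer is an extreme
point of `M` (it cannot be written as `a • x + b • y` with `a + b = 1`, `0 < a < 1`,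
`x, y ∈ M`, `x ≠ y`). Equivalently, the set of `c ∈ B` for which this fails has
Lebesgue measure zero. -/
theorem stmt12 (m N K : ℕ) (S : Matrix (Fin m) (Fin N) ℝ)
    (A : Matrix (Fin K) (Fin N) ℝ) (b : Fin K → ℝ)
    (M : Set (Fin N → ℝ)) (hM : M = {v | S.mulVec v = 0 ∧ A.mulVec v ≤ b})
    (hMne : M.Nonempty)
    (B : Set (Fin N → ℝ)) (hB : B = {c | ∃ C : ℝ, ∀ v ∈ M, c ⬝ᵥ v ≤ C}) :
    volume {c ∈ B | ¬∃ v ∈ M,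
      (∀ w ∈ M, c ⬝ᵥ w ≤ c ⬝ᵥ v) ∧
      (∀ v' ∈ M, (∀ w ∈ M, c ⬝ᵥ w ≤ c ⬝ᵥ v') → v' = v) ∧
      (¬∃ (x y : Fin N → ℝ) (a β : ℝ), x ∈ M ∧ y ∈ M ∧ x ≠ y ∧
        a + β = 1 ∧ 0 < a ∧ a < 1 ∧ v = a • x + β • y)} = 0 := by
  have hcl : IsClosed M :=
    hM ▸ (isClosed_eq (f := (S *ᵥ ·)) (by fun_prop) continuous_const).inter
      (isClosed_le (f := (A *ᵥ ·)) (by fun_prop) continuous_const)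
  change B = boundedDirections M at hB
  subst hB
  have hfrontier : volume (frontier (boundedDirections M)) = 0 :=
    convex_boundedDirections.addHaar_frontier volume
  have hdiff := (convexOn_supportFun hMne).ae_differentiableAt volume
  refine measure_mono_null (fun c ⟨hcB, hbad⟩ => ?_)
    (measure_union_null hfrontier (ae_iff.1 hdiff))
  by_cases hc : c ∈ interior (boundedDirections M)
  · refine Or.inr fun h => hbad ?_
    obtain ⟨v, ⟨hv, hmax⟩, huniq⟩ :=
      existsUnique_isMaxOn_of_differentiableAt hcl hMne hc (h hc)
    refine ⟨v, hv, hmax, fun w hw hwmax => huniq w ⟨hw, hwmax⟩, ?_⟩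
    rintro ⟨x, y, a, β, hx, hy, hxy, hab, ha, ha₁, rfl⟩
    have hext := exposedPoints_subset_extremePoints
      (mem_exposedPoints_of_unique_isMaxOn hv hmax fun w hw hwmax => huniq w ⟨hw, hwmax⟩)
    obtain ⟨hxv, hyv⟩ :=
      (mem_extremePoints.1 hext).2 x hx y hy ⟨a, β, ha, by linarith, hab, rfl⟩
    exact hxy (hxv.trans hyv.symm)
  · exact Or.inl ⟨subset_closure hcB, hc⟩
end
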